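/- arXiv:2003.09368 — 3 statements merged into one kernel-verified Lean document; each statement's English description precedes it below -/
import Mathlib

section
/- Fix integers a, b ≥ 1 and set k = a/b. Then the infinite product ∏_p (1 - 1/p)^{k²} ∑_{m≥0} τ_{-k}(p^m)² p^{-m}, taken over all primes p, converges absolutely to a strictly positive real number. -/
open Filter

/-- `τ_α(n)` (real version): the Dirichlet series coefficients of `ζ(s)^α`, given on
prime powers by `τ_α(p^m) = (∏_{j=0}^{m-1} (α+j))/m!`. -/
noncomputable def tauCoeffR (α : ℝ) (n : ℕ) : ℝ :=
  if n = 0 then 0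
  else n.factorization.prod fun _p e => (∏ j ∈ Finset.range e, (α + j)) / (Nat.factorial e)

/-! With `x = 1/p` and `α = -k`, the `p`-th factor is `(1 - x)^{α²} (1 + α² x + O(x²))`. In its
logarithm the first-order terms cancel, since `log (1 - x) = -x + O(x²)` and
`log (1 + u) = u + O(u²)`; so the logarithms of the factors are `O(1/p²)`, hence summable over the
primes, and the product is the exponential of a convergent series. -/

open Real Topology

noncomputable def tauPrimePow (α : ℝ) (m : ℕ) : ℝ :=
  (∏ j ∈ Finset.range m, (α + j)) / m.factorial

noncomputable def eulerFactor (α x : ℝ) : ℝ :=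
  (1 - x) ^ (α ^ 2) * ∑' m : ℕ, tauPrimePow α m ^ 2 * x ^ m

lemma tauCoeffR_prime_pow {p : ℕ} (hp : p.Prime) (α : ℝ) (m : ℕ) :
    tauCoeffR α (p ^ m) = tauPrimePow α m := by
  rw [tauCoeffR, if_neg (pow_ne_zero m hp.ne_zero), hp.factorization_pow,
    Finsupp.prod_single_index (by simp)]
  rfl

@[simp] lemma tauPrimePow_zero (α : ℝ) : tauPrimePow α 0 = 1 := by simp [tauPrimePow]

@[simp] lemma tauPrimePow_one (α : ℝ) : tauPrimePow α 1 = α := by simp [tauPrimePow]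

lemma tauPrimePow_succ (α : ℝ) (m : ℕ) :
    tauPrimePow α (m + 1) = tauPrimePow α m * ((α + m) / (m + 1)) := by
  rw [tauPrimePow, tauPrimePow, Finset.prod_range_succ, Nat.factorial_succ, div_mul_div_comm]
  push_cast
  ring

section

variable (α : ℝ) {x : ℝ}

/-- Ratio test in a form that tolerates terms vanishing from some point on (when `α` is a
non-positive integer). -/
lemma summable_tauPrimePow_sq_mul_pow (hx0 : 0 ≤ x) (hx1 : x < 1) :
    Summable fun m : ℕ => tauPrimePow α m ^ 2 * x ^ m := by
  obtain ⟨r, hxr, hr1⟩ := exists_between hx1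
  have hratio : Tendsto (fun m : ℕ => ((α + m) / (m + 1)) ^ 2 * x) atTop (𝓝 x) := by
    have h := tendsto_add_mul_div_add_mul_atTop_nhds α 1 1 one_ne_zero
    simp only [one_mul, div_one] at h
    simpa [add_comm (1 : ℝ)] using (h.pow 2).mul_const x
  refine summable_of_ratio_norm_eventually_le hr1 ?_
  filter_upwards [hratio.eventually (gt_mem_nhds hxr)] with m hm
  calc ‖tauPrimePow α (m + 1) ^ 2 * x ^ (m + 1)‖
      = ((α + m) / (m + 1)) ^ 2 * x * ‖tauPrimePow α m ^ 2 * x ^ m‖ := by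
        rw [norm_of_nonneg (by positivity), norm_of_nonneg (by positivity), tauPrimePow_succ]
        ring
    _ ≤ r * ‖tauPrimePow α m ^ 2 * x ^ m‖ := by gcongr

lemma tsum_tauPrimePow_sq_mul_pow_eq (hx0 : 0 ≤ x) (hx1 : x < 1) :
    ∑' m : ℕ, tauPrimePow α m ^ 2 * x ^ m =
      1 + α ^ 2 * x + x ^ 2 * ∑' m : ℕ, tauPrimePow α (m + 2) ^ 2 * x ^ m := by
  rw [← (summable_tauPrimePow_sq_mul_pow α hx0 hx1).sum_add_tsum_nat_add 2, ← tsum_mul_left]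
  simp only [Finset.sum_range_succ, Finset.sum_range_zero, tauPrimePow_zero, tauPrimePow_one]
  congr 1
  · ring
  · exact tsum_congr fun m => by ring

lemma tsum_tauPrimePow_tail_le (hx0 : 0 ≤ x) (hx : x ≤ 1 / 2) :
    ∑' m : ℕ, tauPrimePow α (m + 2) ^ 2 * x ^ m ≤
      ∑' m : ℕ, tauPrimePow α (m + 2) ^ 2 * (1 / 2) ^ m := by
  have hhalf : Summable fun m : ℕ => tauPrimePow α (m + 2) ^ 2 * (1 / 2 : ℝ) ^ m := by
    have h := (summable_nat_add_iff 2).mpr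
      (summable_tauPrimePow_sq_mul_pow α (x := 1 / 2) (by norm_num) (by norm_num))
    exact (h.mul_left 4).congr fun m => by ring
  have hle (m : ℕ) :
      tauPrimePow α (m + 2) ^ 2 * x ^ m ≤ tauPrimePow α (m + 2) ^ 2 * (1 / 2) ^ m := by
    gcongr
  exact (hhalf.of_nonneg_of_le (fun m => by positivity) hle).tsum_le_tsum hle hhalf

end

lemma abs_log_one_sub_rpow_mul_one_add_le {c x u : ℝ} (hc : 0 ≤ c) (hx0 : 0 ≤ x)
    (hx : x ≤ 1 / 2) (hu : c * x ≤ u) :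
    |log ((1 - x) ^ c * (1 + u))| ≤ 2 * c * x ^ 2 + u ^ 2 + (u - c * x) := by
  have hx1 : 0 < 1 - x := by linarith
  have hu0 : 0 ≤ u := (mul_nonneg hc hx0).trans hu
  have hu1 : 0 < 1 + u := by linarith
  rw [log_mul (rpow_pos_of_pos hx1 c).ne' hu1.ne', log_rpow hx1]
  have hlog_x_le : log (1 - x) ≤ -x := by linarith [log_le_sub_one_of_pos hx1]
  have hlog_x_ge : -x - 2 * x ^ 2 ≤ log (1 - x) := by
    have : (1 - x)⁻¹ ≤ 1 + x + 2 * x ^ 2 := by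
      rw [inv_le_iff_one_le_mul₀ hx1]
      nlinarith
    linarith [one_sub_inv_le_log_of_pos hx1]
  have hlog_u_le : log (1 + u) ≤ u := by linarith [log_le_sub_one_of_pos hu1]
  have hlog_u_ge : u - u ^ 2 ≤ log (1 + u) := by
    have : (1 + u)⁻¹ ≤ 1 - u + u ^ 2 := by
      rw [inv_le_iff_one_le_mul₀ hu1]
      nlinarith
    linarith [one_sub_inv_le_log_of_pos hu1]
  rw [abs_le]
  constructor
  · nlinarith [mul_le_mul_of_nonneg_left hlog_x_ge hc]
  · nlinarith [mul_le_mul_of_nonneg_left hlog_x_le hc]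

lemma eulerFactor_eq {α x : ℝ} (hx0 : 0 ≤ x) (hx1 : x < 1) :
    eulerFactor α x = (1 - x) ^ (α ^ 2) *
      (1 + (α ^ 2 * x + x ^ 2 * ∑' m : ℕ, tauPrimePow α (m + 2) ^ 2 * x ^ m)) := by
  rw [eulerFactor, tsum_tauPrimePow_sq_mul_pow_eq α hx0 hx1, add_assoc]

lemma eulerFactor_pos {α x : ℝ} (hx0 : 0 ≤ x) (hx1 : x < 1) : 0 < eulerFactor α x := by
  rw [eulerFactor_eq hx0 hx1]
  have : 0 ≤ ∑' m : ℕ, tauPrimePow α (m + 2) ^ 2 * x ^ m := tsum_nonneg fun m => by positivity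
  exact mul_pos (rpow_pos_of_pos (by linarith) _) (by positivity)

lemma abs_log_eulerFactor_le (α : ℝ) :
    ∃ C, ∀ x, 0 ≤ x → x ≤ 1 / 2 → |log (eulerFactor α x)| ≤ C * x ^ 2 := by
  set M := ∑' m : ℕ, tauPrimePow α (m + 2) ^ 2 * (1 / 2 : ℝ) ^ m
  refine ⟨2 * α ^ 2 + (α ^ 2 + M) ^ 2 + M, fun x hx0 hx => ?_⟩
  set T := ∑' m : ℕ, tauPrimePow α (m + 2) ^ 2 * x ^ m
  have hT0 : 0 ≤ T := tsum_nonneg fun m => by positivity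
  have hTM : T ≤ M := tsum_tauPrimePow_tail_le α hx0 hx
  have hu : α ^ 2 * x + x ^ 2 * T ≤ (α ^ 2 + M) * x := by
    have hx1 : 0 ≤ 1 - x := by linarith
    nlinarith [mul_le_mul_of_nonneg_left hTM hx0, mul_nonneg (mul_nonneg hx0 hT0) hx1]
  rw [eulerFactor_eq hx0 (by linarith)]
  refine (abs_log_one_sub_rpow_mul_one_add_le (sq_nonneg α) hx0 hx
    (by nlinarith)).trans ?_
  have hu2 : (α ^ 2 * x + x ^ 2 * T) ^ 2 ≤ ((α ^ 2 + M) * x) ^ 2 := by gcongr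
  nlinarith

lemma summable_log_eulerFactor {ι : Type*} (α : ℝ) {x : ι → ℝ} (hx0 : ∀ i, 0 ≤ x i)
    (hx : ∀ i, x i ≤ 1 / 2) (hx2 : Summable fun i => x i ^ 2) :
    Summable fun i => log (eulerFactor α (x i)) := by
  obtain ⟨C, hC⟩ := abs_log_eulerFactor_le α
  exact (hx2.mul_left C).of_norm_bounded fun i => hC _ (hx0 i) (hx i)

lemma summable_one_div_prime_sq : Summable fun p : Nat.Primes => (1 / ((p : ℕ) : ℝ)) ^ 2 := by
  refine ((Real.summable_nat_pow_inv.mpr one_lt_two).comp_injective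
    Nat.Primes.coe_nat_injective).congr fun p => ?_
  simp [one_div, inv_pow]

theorem euler_product_positive_general (a b : ℕ) :
    (∀ p : Nat.Primes, Summable fun m : ℕ =>
        tauCoeffR (-((a : ℝ) / b)) ((p : ℕ) ^ m) ^ 2 / ((p : ℕ) : ℝ) ^ m) ∧
    Multipliable (fun p : Nat.Primes =>
      (1 - 1 / ((p : ℕ) : ℝ)) ^ (((a : ℝ) / b) ^ 2) *
        ∑' m : ℕ, tauCoeffR (-((a : ℝ) / b)) ((p : ℕ) ^ m) ^ 2 / ((p : ℕ) : ℝ) ^ m) ∧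
    0 < ∏' p : Nat.Primes,
      (1 - 1 / ((p : ℕ) : ℝ)) ^ (((a : ℝ) / b) ^ 2) *
        ∑' m : ℕ, tauCoeffR (-((a : ℝ) / b)) ((p : ℕ) ^ m) ^ 2 / ((p : ℕ) : ℝ) ^ m := by
  set α : ℝ := -((a : ℝ) / b)
  have hx0 (p : Nat.Primes) : 0 ≤ 1 / ((p : ℕ) : ℝ) := by positivity
  have hx (p : Nat.Primes) : 1 / ((p : ℕ) : ℝ) ≤ 1 / 2 := by
    gcongr
    exact_mod_cast p.prop.two_le
  have hterm (p : Nat.Primes) :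
      (fun m : ℕ => tauCoeffR α ((p : ℕ) ^ m) ^ 2 / ((p : ℕ) : ℝ) ^ m) =
        fun m => tauPrimePow α m ^ 2 * (1 / ((p : ℕ) : ℝ)) ^ m := by
    ext m
    rw [tauCoeffR_prime_pow p.prop, div_eq_mul_one_div, one_div_pow]
  have hfactor : (fun p : Nat.Primes => (1 - 1 / ((p : ℕ) : ℝ)) ^ (((a : ℝ) / b) ^ 2) *
      ∑' m : ℕ, tauCoeffR α ((p : ℕ) ^ m) ^ 2 / ((p : ℕ) : ℝ) ^ m) =
      fun p : Nat.Primes => eulerFactor α (1 / ((p : ℕ) : ℝ)) := by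
    ext p
    rw [hterm p, eulerFactor, neg_sq]
  have hpos (p : Nat.Primes) : 0 < eulerFactor α (1 / ((p : ℕ) : ℝ)) :=
    eulerFactor_pos (hx0 p) ((hx p).trans_lt (by norm_num))
  have hlog := summable_log_eulerFactor α hx0 hx summable_one_div_prime_sq
  refine ⟨fun p => ?_, ?_, ?_⟩
  · rw [hterm p]
    exact summable_tauPrimePow_sq_mul_pow α (hx0 p) ((hx p).trans_lt (by norm_num))
  · rw [hfactor]
    exact Real.multipliable_of_summable_log hpos hlog
  · rw [hfactor, ← Real.rexp_tsum_eq_tprod hpos hlog]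
    exact exp_pos _

/-- The Euler product `∏_p (1 - 1/p)^{k²} ∑_{m ≥ 0} τ_{-k}(p^m)² p^{-m}`, `k = a/b`,
converges absolutely to a strictly positive real number. -/
theorem euler_product_positive (a b : ℕ) (ha : 0 < a) (hb : 0 < b) :
    (∀ p : Nat.Primes, Summable fun m : ℕ =>
        tauCoeffR (-((a : ℝ) / b)) ((p : ℕ) ^ m) ^ 2 / ((p : ℕ) : ℝ) ^ m) ∧
    Multipliable (fun p : Nat.Primes =>
      (1 - 1 / ((p : ℕ) : ℝ)) ^ (((a : ℝ) / b) ^ 2) *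
        ∑' m : ℕ, tauCoeffR (-((a : ℝ) / b)) ((p : ℕ) ^ m) ^ 2 / ((p : ℕ) : ℝ) ^ m) ∧
    0 < ∏' p : Nat.Primes,
      (1 - 1 / ((p : ℕ) : ℝ)) ^ (((a : ℝ) / b) ^ 2) *
        ∑' m : ℕ, tauCoeffR (-((a : ℝ) / b)) ((p : ℕ) ^ m) ^ 2 / ((p : ℕ) : ℝ) ^ m :=
  euler_product_positive_general a b
end

section
/- Let k be a positive integer and let z₁, z₂, z₃, s be complex numbers with Re(z₂+2s) > 0, Re(z₁+z₂+2s) > 0 and Re(z₂+z₃+2s) > 0. Then ∑_{ℓ ≥ 1} f_{z₁,z₃}(kℓ) ℓ^{-(1+z₂+2s)} = ( ζ(1+z₁+z₂+2s) ζ(1+z₂+z₃+2s) / ζ(1+z₂+2s) ) × ∏_{p^{k_p} ∥ k} ( ∑_{m≥0} f_{z₁,z₃}(p^{m+k_p}) p^{-m(1+z₂+2s)} ) / ( ∑_{m≥0} f_{z₁,z₃}(p^{m}) p^{-m(1+z₂+2s)} ), where p^{k_p} ∥ k means p^{k_p} exactly divides k. -/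
open Complex

/-- `f_{α,γ}(n) = ∑_{n₁n₂n₃ = n} μ(n₁) n₂^{-α} n₃^{-γ}`. -/
noncomputable def fShift (α γ : ℂ) (n : ℕ) : ℂ :=
  ∑ p ∈ n.divisorsAntidiagonal, (ArithmeticFunction.moebius p.1 : ℂ) *
    ∑ q ∈ p.2.divisorsAntidiagonal, (q.1 : ℂ) ^ (-α) * (q.2 : ℂ) ^ (-γ)

/-!
For multiplicative `f` and `p ∤ k`, writing `ℓ = p ^ j * m` with `p ∤ m` splits
`∑ f(p^a k ℓ) ℓ^{-w}` into the shifted local factor `∑_j f(p^{j+a}) p^{-jw}` times a series that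
does not depend on `a`. Comparing `a = k_p` with `a = 0` and inducting over the prime powers of `k`
turns `∑ f(kℓ) ℓ^{-w}` into `L(f, w)` times the product of ratios of local factors. For
`f_{z₁,z₃} = μ * n^{-z₁} * n^{-z₃}` we have `L(f, w) = ζ(w + z₁) ζ(w + z₃) / ζ(w) ≠ 0`, and the
same splitting with `k = 1` shows that the unshifted local factors do not vanish either.
-/

open ArithmeticFunction LSeries
open scoped ArithmeticFunction.Moebius

lemma LSeriesSummable.comp_mul_left {f : ℕ → ℂ} {w : ℂ} (hf : LSeriesSummable f w) {k : ℕ}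
    (hk : k ≠ 0) : LSeriesSummable (fun n => f (k * n)) w := by
  have hkw : (k : ℂ) ^ w ≠ 0 := by simp [hk]
  refine ((hf.comp_injective (mul_right_injective₀ hk)).mul_left ((k : ℂ) ^ w)).congr fun n => ?_
  rcases eq_or_ne n 0 with rfl | hn
  · simp
  simp only [Function.comp_apply, term_of_ne_zero hn, term_of_ne_zero (mul_ne_zero hk hn),
    Nat.cast_mul, natCast_mul_natCast_cpow]
  field_simp

lemma LSeries_eq_tsum_ite (f : ℕ → ℂ) (w : ℂ) :
    LSeries f w = ∑' n : ℕ, if n = 0 then 0 else f n * (n : ℂ) ^ (-w) := by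
  simp only [LSeries, term_def, cpow_neg, div_eq_mul_inv]

namespace Nat.Prime

variable {p : ℕ}

lemma factorization_pow_mul_of_not_dvd (hp : p.Prime) (j : ℕ) {m : ℕ} (hm : ¬ p ∣ m) :
    (p ^ j * m).factorization p = j := by
  have hm0 : m ≠ 0 := by rintro rfl; exact hm (dvd_zero p)
  simp [Nat.factorization_mul (pow_ne_zero j hp.ne_zero) hm0, hp.factorization_pow,
    Nat.factorization_eq_zero_of_not_dvd hm]

lemma injective_pow_mul (hp : p.Prime) :
    Function.Injective fun x : ℕ × {m : ℕ // ¬ p ∣ m} => p ^ x.1 * x.2 := by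
  rintro ⟨j, m, hm⟩ ⟨j', m', hm'⟩ h
  dsimp only at h
  obtain rfl : j = j' := by
    rw [← hp.factorization_pow_mul_of_not_dvd j hm, h, hp.factorization_pow_mul_of_not_dvd j' hm']
  obtain rfl : m = m' := Nat.eq_of_mul_eq_mul_left (pow_pos hp.pos j) h
  rfl

lemma range_pow_mul (hp : p.Prime) :
    Set.range (fun x : ℕ × {m : ℕ // ¬ p ∣ m} => p ^ x.1 * x.2) = {n | n ≠ 0} := by
  ext n
  constructor
  · rintro ⟨⟨j, m, hm⟩, rfl⟩
    exact mul_ne_zero (pow_ne_zero j hp.ne_zero) (by rintro rfl; exact hm (dvd_zero p))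
  · intro hn
    exact ⟨⟨n.factorization p, ordCompl[p] n, Nat.not_dvd_ordCompl hp hn⟩,
      Nat.ordProj_mul_ordCompl_eq_self n p⟩

end Nat.Prime

noncomputable def shiftedEulerFactor (f : ℕ → ℂ) (w : ℂ) (p a : ℕ) : ℂ :=
  ∑' m : ℕ, f (p ^ (m + a)) * (p : ℂ) ^ (-(m : ℂ) * w)

lemma shiftedEulerFactor_eq_tsum_term (f : ℕ → ℂ) (w : ℂ) {p : ℕ} (hp : p ≠ 0) (a : ℕ) :
    shiftedEulerFactor f w p a = ∑' j : ℕ, term (fun n => f (p ^ a * n)) w (p ^ j) := by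
  refine tsum_congr fun j => ?_
  rw [term_of_ne_zero (pow_ne_zero j hp), pow_add, mul_comm (p ^ j), Nat.cast_pow, neg_mul,
    ← mul_neg, natCast_cpow_natCast_mul, cpow_neg, div_eq_mul_inv]

namespace ArithmeticFunction.IsMultiplicative

variable {f : ArithmeticFunction ℂ} {w : ℂ} {p k : ℕ}

lemma term_pow_mul_mul (hf : f.IsMultiplicative) (hp : p.Prime) (hpk : ¬ p ∣ k) (a j : ℕ)
    {m : ℕ} (hpm : ¬ p ∣ m) :
    term (fun n => f (p ^ a * k * n)) w (p ^ j * m) =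
      term (fun n => f (p ^ a * n)) w (p ^ j) * term (fun n => f (k * n)) w m := by
  have hm : m ≠ 0 := by rintro rfl; exact hpm (dvd_zero p)
  have hcop : (p ^ a * p ^ j).Coprime (k * m) := by
    rw [← pow_add]
    exact Nat.Coprime.pow_left _ (hp.coprime_iff_not_dvd.2 (by rw [hp.dvd_mul]; tauto))
  rw [term_of_ne_zero (mul_ne_zero (pow_ne_zero j hp.ne_zero) hm),
    term_of_ne_zero (pow_ne_zero j hp.ne_zero), term_of_ne_zero hm, Nat.cast_mul,
    natCast_mul_natCast_cpow, div_mul_div_comm, ← hf.map_mul_of_coprime hcop,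
    show p ^ a * k * (p ^ j * m) = p ^ a * p ^ j * (k * m) by ring]

theorem LSeries_pow_mul_mul (hf : f.IsMultiplicative) (hs : LSeriesSummable f w)
    (hp : p.Prime) (hpk : ¬ p ∣ k) (a : ℕ) :
    LSeries (fun n => f (p ^ a * k * n)) w =
      shiftedEulerFactor f w p a * ∑' m : {m : ℕ // ¬ p ∣ m}, term (fun n => f (k * n)) w m := by
  have hk : k ≠ 0 := by rintro rfl; exact hpk (dvd_zero p)
  have hA : Summable fun j => ‖term (fun n => f (p ^ a * n)) w (p ^ j)‖ :=
    summable_norm_iff.2 ((hs.comp_mul_left (pow_ne_zero a hp.ne_zero)).comp_injective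
      (Nat.pow_right_injective hp.two_le))
  have hB : Summable fun m : {m : ℕ // ¬ p ∣ m} => ‖term (fun n => f (k * n)) w m‖ :=
    summable_norm_iff.2 ((hs.comp_mul_left hk).comp_injective Subtype.val_injective)
  have hsupp : Function.support (term (fun n => f (p ^ a * k * n)) w) ⊆
      Set.range (fun x : ℕ × {m : ℕ // ¬ p ∣ m} => p ^ x.1 * x.2) := by
    rw [hp.range_pow_mul]
    rintro n hn rfl
    exact hn (term_zero _ _)
  rw [shiftedEulerFactor_eq_tsum_term _ _ hp.ne_zero, tsum_mul_tsum_of_summable_norm hA hB,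
    LSeries, ← hp.injective_pow_mul.tsum_eq hsupp]
  exact tsum_congr fun x => hf.term_pow_mul_mul hp hpk a x.1 x.2.2

theorem LSeries_pow_mul_mul_mul_shiftedEulerFactor_zero (hf : f.IsMultiplicative)
    (hs : LSeriesSummable f w) (hp : p.Prime) (hpk : ¬ p ∣ k) (a : ℕ) :
    LSeries (fun n => f (p ^ a * k * n)) w * shiftedEulerFactor f w p 0 =
      shiftedEulerFactor f w p a * LSeries (fun n => f (k * n)) w := by
  have h₀ := hf.LSeries_pow_mul_mul hs hp hpk 0
  simp only [pow_zero, one_mul] at h₀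
  rw [hf.LSeries_pow_mul_mul hs hp hpk a, h₀]
  ring

theorem shiftedEulerFactor_zero_ne_zero (hf : f.IsMultiplicative) (hs : LSeriesSummable f w)
    (hp : p.Prime) (hL : LSeries f w ≠ 0) : shiftedEulerFactor f w p 0 ≠ 0 := by
  have h := hf.LSeries_pow_mul_mul hs hp (k := 1) hp.not_dvd_one 0
  simp only [pow_zero, one_mul] at h
  intro h₀
  rw [h₀, zero_mul] at h
  exact hL h

theorem LSeries_comp_mul_left_mul_prod (hf : f.IsMultiplicative) (hs : LSeriesSummable f w)
    {k : ℕ} (hk : k ≠ 0) :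
    LSeries (fun n => f (k * n)) w * ∏ p ∈ k.primeFactors, shiftedEulerFactor f w p 0 =
      LSeries f w * ∏ p ∈ k.primeFactors, shiftedEulerFactor f w p (k.factorization p) := by
  induction k using Nat.recOnPrimePow with
  | zero => exact absurd rfl hk
  | one => simp
  | prime_pow_mul a p n hp hpa hn ih =>
    have ha : a ≠ 0 := by rintro rfl; exact hpa (dvd_zero p)
    have hpn : p ^ n ≠ 0 := pow_ne_zero n hp.ne_zero
    have hp_notMem : p ∉ a.primeFactors := fun h => hpa (Nat.dvd_of_mem_primeFactors h)
    have hfac : ∀ q ∈ a.primeFactors, (p ^ n * a).factorization q = a.factorization q := by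
      intro q hq
      rw [Nat.factorization_mul hpn ha, Finsupp.add_apply, hp.factorization_pow,
        Finsupp.single_eq_of_ne (by rintro rfl; exact hp_notMem hq), zero_add]
    have hprod : ∏ q ∈ a.primeFactors, shiftedEulerFactor f w q ((p ^ n * a).factorization q) =
        ∏ q ∈ a.primeFactors, shiftedEulerFactor f w q (a.factorization q) :=
      Finset.prod_congr rfl fun q hq => by rw [hfac q hq]
    rw [Nat.primeFactors_mul hpn ha, Nat.primeFactors_prime_pow hn.ne' hp, ← Finset.insert_eq,
      Finset.prod_insert hp_notMem, Finset.prod_insert hp_notMem, hprod,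
      hp.factorization_pow_mul_of_not_dvd n hpa]
    calc LSeries (fun m => f (p ^ n * a * m)) w *
          (shiftedEulerFactor f w p 0 * ∏ q ∈ a.primeFactors, shiftedEulerFactor f w q 0)
        = shiftedEulerFactor f w p n *
          (LSeries (fun m => f (a * m)) w * ∏ q ∈ a.primeFactors, shiftedEulerFactor f w q 0) := by
          rw [← mul_assoc, hf.LSeries_pow_mul_mul_mul_shiftedEulerFactor_zero hs hp hpa n,
            mul_assoc]
      _ = _ := by rw [ih ha, mul_left_comm]

theorem LSeries_comp_mul_left_eq (hf : f.IsMultiplicative) (hs : LSeriesSummable f w)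
    (hL : LSeries f w ≠ 0) {k : ℕ} (hk : k ≠ 0) :
    LSeries (fun n => f (k * n)) w = LSeries f w * ∏ p ∈ k.primeFactors,
      shiftedEulerFactor f w p (k.factorization p) / shiftedEulerFactor f w p 0 := by
  have h₀ : ∏ p ∈ k.primeFactors, shiftedEulerFactor f w p 0 ≠ 0 := Finset.prod_ne_zero_iff.2
    fun p hp => hf.shiftedEulerFactor_zero_ne_zero hs (Nat.prime_of_mem_primeFactors hp) hL
  rw [Finset.prod_div_distrib, ← mul_div_assoc, eq_div_iff h₀,
    hf.LSeries_comp_mul_left_mul_prod hs hk]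

end ArithmeticFunction.IsMultiplicative

namespace ArithmeticFunction

noncomputable def natCpow (s : ℂ) : ArithmeticFunction ℂ :=
  ⟨fun n => if n = 0 then 0 else (n : ℂ) ^ s, by simp⟩

lemma natCpow_apply (s : ℂ) {n : ℕ} (hn : n ≠ 0) : natCpow s n = (n : ℂ) ^ s := if_neg hn

lemma isMultiplicative_natCpow (s : ℂ) : (natCpow s).IsMultiplicative := by
  refine ⟨by simp [natCpow_apply], fun {m n} _ => ?_⟩
  rcases eq_or_ne m 0 with rfl | hm
  · simp [natCpow]
  rcases eq_or_ne n 0 with rfl | hn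
  · simp [natCpow]
  rw [natCpow_apply s (mul_ne_zero hm hn), natCpow_apply s hm, natCpow_apply s hn, Nat.cast_mul,
    natCast_mul_natCast_cpow]

lemma term_natCpow (s w : ℂ) (n : ℕ) : term (natCpow s) w n = term 1 (w - s) n := by
  rcases eq_or_ne n 0 with rfl | hn
  · simp
  have hn' : (n : ℂ) ≠ 0 := Nat.cast_ne_zero.2 hn
  rw [term_of_ne_zero hn, term_of_ne_zero hn, natCpow_apply s hn, Pi.one_apply, cpow_sub _ _ hn']
  field_simp

lemma LSeriesSummable_natCpow {s w : ℂ} (h : 1 < (w - s).re) : LSeriesSummable (natCpow s) w :=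
  (LSeriesSummable_one_iff.2 h).congr fun n => (term_natCpow s w n).symm

lemma LSeries_natCpow {s w : ℂ} (h : 1 < (w - s).re) :
    LSeries (natCpow s) w = riemannZeta (w - s) := by
  rw [LSeries, tsum_congr (term_natCpow s w)]
  exact LSeries_one_eq_riemannZeta h

lemma LSeriesSummable_intCoe_moebius {w : ℂ} (hw : 1 < w.re) :
    LSeriesSummable ⇑(μ : ArithmeticFunction ℂ) w :=
  (LSeriesSummable_congr w fun _ => intCoe_apply).2 (LSeriesSummable_moebius_iff.2 hw)

lemma LSeries_intCoe_moebius {w : ℂ} (hw : 1 < w.re) :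
    LSeries ⇑(μ : ArithmeticFunction ℂ) w = (riemannZeta w)⁻¹ := by
  rw [LSeries_congr (fun _ => intCoe_apply) w, ← LSeries_one_eq_riemannZeta hw]
  exact eq_inv_of_mul_eq_one_right (LSeries_one_mul_Lseries_moebius hw)

variable {α γ w : ℂ}

lemma LSeriesSummable_moebius_mul_natCpow_mul_natCpow (hw : 1 < w.re) (hα : 1 < (w + α).re)
    (hγ : 1 < (w + γ).re) :
    LSeriesSummable ⇑((μ : ArithmeticFunction ℂ) * (natCpow (-α) * natCpow (-γ))) w := by
  rw [← sub_neg_eq_add] at hα hγ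
  exact LSeriesSummable_mul (LSeriesSummable_intCoe_moebius hw)
    (LSeriesSummable_mul (LSeriesSummable_natCpow hα) (LSeriesSummable_natCpow hγ))

lemma LSeries_moebius_mul_natCpow_mul_natCpow (hw : 1 < w.re) (hα : 1 < (w + α).re)
    (hγ : 1 < (w + γ).re) :
    LSeries ⇑((μ : ArithmeticFunction ℂ) * (natCpow (-α) * natCpow (-γ))) w =
      riemannZeta (w + α) * riemannZeta (w + γ) / riemannZeta w := by
  rw [← sub_neg_eq_add] at hα hγ
  rw [LSeries_mul' (LSeriesSummable_intCoe_moebius hw)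
      (LSeriesSummable_mul (LSeriesSummable_natCpow hα) (LSeriesSummable_natCpow hγ)),
    LSeries_mul' (LSeriesSummable_natCpow hα) (LSeriesSummable_natCpow hγ),
    LSeries_intCoe_moebius hw, LSeries_natCpow hα, LSeries_natCpow hγ]
  simp only [sub_neg_eq_add]
  ring

end ArithmeticFunction

lemma fShift_eq_moebius_mul (α γ : ℂ) :
    fShift α γ = ⇑((μ : ArithmeticFunction ℂ) * (natCpow (-α) * natCpow (-γ))) := by
  funext n
  refine Finset.sum_congr rfl fun d _ => ?_
  rw [intCoe_apply, mul_apply]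
  refine congrArg _ (Finset.sum_congr rfl fun e he => ?_)
  rw [natCpow_apply _ (Nat.ne_zero_of_mem_divisorsAntidiagonal he).1,
    natCpow_apply _ (Nat.ne_zero_of_mem_divisorsAntidiagonal he).2]

/-- The Dirichlet series identity for `∑_ℓ f_{z₁,z₃}(kℓ) ℓ^{-(1+z₂+2s)}`. -/
theorem fShift_dirichlet_series (k : ℕ) (hk : 0 < k) (z₁ z₂ z₃ s : ℂ)
    (h₂ : 0 < (z₂ + 2 * s).re) (h₁₂ : 0 < (z₁ + z₂ + 2 * s).re)
    (h₂₃ : 0 < (z₂ + z₃ + 2 * s).re) :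
    (∑' ℓ : ℕ, if ℓ = 0 then 0 else
        fShift z₁ z₃ (k * ℓ) * (ℓ : ℂ) ^ (-(1 + z₂ + 2 * s))) =
      riemannZeta (1 + z₁ + z₂ + 2 * s) * riemannZeta (1 + z₂ + z₃ + 2 * s) /
          riemannZeta (1 + z₂ + 2 * s) *
        ∏ p ∈ k.primeFactors,
          (∑' m : ℕ, fShift z₁ z₃ (p ^ (m + k.factorization p)) *
              (p : ℂ) ^ (-(m : ℂ) * (1 + z₂ + 2 * s))) /
            (∑' m : ℕ, fShift z₁ z₃ (p ^ m) * (p : ℂ) ^ (-(m : ℂ) * (1 + z₂ + 2 * s))) := by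
  have hw : 1 < (1 + z₂ + 2 * s).re := by
    simp only [add_re, one_re] at h₂ ⊢; linarith
  have h₁ : 1 < (1 + z₂ + 2 * s + z₁).re := by
    simp only [add_re, one_re] at h₁₂ ⊢; linarith
  have h₃ : 1 < (1 + z₂ + 2 * s + z₃).re := by
    simp only [add_re, one_re] at h₂₃ ⊢; linarith
  have hL := LSeries_moebius_mul_natCpow_mul_natCpow hw h₁ h₃
  have hL₀ : LSeries _ _ ≠ 0 := hL ▸ div_ne_zero (mul_ne_zero
    (riemannZeta_ne_zero_of_one_lt_re h₁) (riemannZeta_ne_zero_of_one_lt_re h₃))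
    (riemannZeta_ne_zero_of_one_lt_re hw)
  have key := (isMultiplicative_moebius.intCast.mul
    ((isMultiplicative_natCpow _).mul (isMultiplicative_natCpow _))).LSeries_comp_mul_left_eq
    (LSeriesSummable_moebius_mul_natCpow_mul_natCpow hw h₁ h₃) hL₀ hk.ne'
  rw [LSeries_eq_tsum_ite, hL, ← fShift_eq_moebius_mul] at key
  simp only [shiftedEulerFactor, add_zero] at key
  rwa [show 1 + z₂ + 2 * s + z₁ = 1 + z₁ + z₂ + 2 * s by ring,
    show 1 + z₂ + 2 * s + z₃ = 1 + z₂ + z₃ + 2 * s by ring] at key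
end

section
/- Let ψ be a primitive Dirichlet character modulo q, and let k, d be positive integers with d | kq. Write k = k′ k_q where (k′, q) = 1 and every prime dividing k_q divides q. Then: (i) if d is not of the form d = k_q d′ with (d′, q) = 1, then δ(q, kq, d, ψ) = 0; and (ii) if d = k_q d′ with (d′, q) = 1, then δ(q, kq, d, ψ) = δ(q, k′q, d′, ψ). -/
open Complex

/-- `δ(q, K, d, ψ) = ∑_{e ∣ d, e ∣ K/q} (μ(d/e)/φ(K/e)) ψ̄(-K/(eq)) ψ(d/e) μ(K/(eq))`. -/
noncomputable def deltaFactor (q K d : ℕ) (ψ : DirichletCharacter ℂ q) : ℂ :=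
  ∑ e ∈ d.divisors.filter (fun e => e ∣ K / q),
    ((ArithmeticFunction.moebius (d / e) : ℂ) / (Nat.totient (K / e) : ℂ)) *
      (starRingEnd ℂ) (ψ (-((K / (e * q) : ℕ) : ZMod q))) *
      ψ ((d / e : ℕ) : ZMod q) * (ArithmeticFunction.moebius (K / (e * q)) : ℂ)

/-!
Only the divisors `e` for which both `K/(eq)` and `d/e` are coprime to `q` contribute, since
otherwise a value of `ψ` vanishes. With `K = k q`, every prime of `k_q` divides `q`, so `k_q` is
coprime to `k/e` and hence divides `e`. Writing `e = k_q e'`, the factor `k_q` cancels from every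
argument of a surviving term, which gives (ii); and `d = k_q · e'(d/e)` with `e' ∣ k'` and `d/e`
coprime to `q`, which gives (i).
-/

namespace Nat

theorem pos_of_forall_prime_dvd_imp_dvd {c q : ℕ} (hq : 0 < q)
    (h : ∀ p : ℕ, p.Prime → p ∣ c → p ∣ q) : 0 < c := by
  obtain ⟨p, hqp, hp⟩ := exists_infinite_primes (q + 1)
  refine pos_of_ne_zero fun hc => ?_
  have := le_of_dvd hq (h p hp (hc ▸ dvd_zero p))
  omega

theorem dvd_of_coprime_div_of_forall_prime_dvd_imp_dvd {c q n e : ℕ}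
    (h : ∀ p : ℕ, p.Prime → p ∣ c → p ∣ q) (hcn : c ∣ n) (hen : e ∣ n)
    (hcop : (n / e).Coprime q) : c ∣ e := by
  have hc : c.Coprime (n / e) := coprime_of_dvd fun p hp hpc hpn =>
    hp.one_lt.ne' (dvd_one.mp (hcop ▸ dvd_gcd hpn (h p hp hpc)))
  exact hc.dvd_of_dvd_mul_right (by rwa [Nat.mul_div_cancel' hen])

end Nat

section

variable {q : ℕ} (ψ : DirichletCharacter ℂ q)

noncomputable def deltaTerm (K d e : ℕ) : ℂ :=
  ((ArithmeticFunction.moebius (d / e) : ℂ) / (Nat.totient (K / e) : ℂ)) *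
    (starRingEnd ℂ) (ψ (-((K / (e * q) : ℕ) : ZMod q))) *
    ψ ((d / e : ℕ) : ZMod q) * (ArithmeticFunction.moebius (K / (e * q)) : ℂ)

theorem deltaFactor_mul_eq_sum (hq : 0 < q) (m d : ℕ) :
    deltaFactor q (m * q) d ψ = ∑ e ∈ d.divisors.filter (· ∣ m), deltaTerm ψ (m * q) d e := by
  rw [deltaFactor, Nat.mul_div_cancel _ hq]
  rfl

theorem deltaTerm_mul_left {c : ℕ} (hc : 0 < c) (K d e : ℕ) :
    deltaTerm ψ (c * K) (c * d) (c * e) = deltaTerm ψ K d e := by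
  simp only [deltaTerm, mul_assoc c e q, Nat.mul_div_mul_left _ _ hc]

theorem deltaTerm_mul_eq_zero_of_not_coprime_div (hq : 0 < q) {m d e : ℕ}
    (h : ¬ (m / e).Coprime q) : deltaTerm ψ (m * q) d e = 0 := by
  have hψ : ψ (-((m / e : ℕ) : ZMod q)) = 0 :=
    ψ.map_nonunit (by rwa [IsUnit.neg_iff, ZMod.isUnit_iff_coprime])
  simp [deltaTerm, Nat.mul_div_mul_right _ _ hq, hψ]

theorem deltaTerm_eq_zero_of_not_coprime_div (K : ℕ) {d e : ℕ}
    (h : ¬ (d / e).Coprime q) : deltaTerm ψ K d e = 0 := by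
  have hψ : ψ ((d / e : ℕ) : ZMod q) = 0 :=
    ψ.map_nonunit (by rwa [ZMod.isUnit_iff_coprime])
  simp [deltaTerm, hψ]

theorem exists_eq_mul_coprime_of_deltaFactor_ne_zero (hq : 0 < q) {c m d : ℕ}
    (hc : ∀ p : ℕ, p.Prime → p ∣ c → p ∣ q) (hm : m.Coprime q)
    (h : deltaFactor q (c * m * q) d ψ ≠ 0) : ∃ d', d = c * d' ∧ d'.Coprime q := by
  rw [deltaFactor_mul_eq_sum ψ hq] at h
  obtain ⟨e, he, hne⟩ := Finset.exists_ne_zero_of_sum_ne_zero h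
  simp only [Finset.mem_filter, Nat.mem_divisors] at he
  obtain ⟨⟨hed, -⟩, hem⟩ := he
  have hcop_cm : (c * m / e).Coprime q := by
    by_contra hcop
    exact hne (deltaTerm_mul_eq_zero_of_not_coprime_div ψ hq hcop)
  have hcop_d : (d / e).Coprime q := by
    by_contra hcop
    exact hne (deltaTerm_eq_zero_of_not_coprime_div ψ _ hcop)
  obtain ⟨e', rfl⟩ :=
    Nat.dvd_of_coprime_div_of_forall_prime_dvd_imp_dvd hc (dvd_mul_right c m) hem hcop_cm
  have he'm : e' ∣ m :=
    Nat.dvd_of_mul_dvd_mul_left (Nat.pos_of_forall_prime_dvd_imp_dvd hq hc) hem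
  exact ⟨e' * (d / (c * e')), by rw [← mul_assoc, Nat.mul_div_cancel' hed],
    (hm.coprime_dvd_left he'm).mul_left hcop_d⟩

theorem deltaFactor_mul_mul (hq : 0 < q) {c : ℕ} (hc : ∀ p : ℕ, p.Prime → p ∣ c → p ∣ q)
    (m d : ℕ) : deltaFactor q (c * m * q) (c * d) ψ = deltaFactor q (m * q) d ψ := by
  have hc0 := Nat.pos_of_forall_prime_dvd_imp_dvd hq hc
  rw [deltaFactor_mul_eq_sum ψ hq, deltaFactor_mul_eq_sum ψ hq]
  have hsub : (d.divisors.filter (· ∣ m)).image (c * ·) ⊆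
      (c * d).divisors.filter (· ∣ c * m) := by
    intro e he
    simp only [Finset.mem_image, Finset.mem_filter, Nat.mem_divisors] at he ⊢
    obtain ⟨e', ⟨⟨he'd, hd⟩, he'm⟩, rfl⟩ := he
    exact ⟨⟨mul_dvd_mul_left c he'd, mul_ne_zero hc0.ne' hd⟩, mul_dvd_mul_left c he'm⟩
  rw [← Finset.sum_subset hsub, Finset.sum_image fun _ _ _ _ => Nat.eq_of_mul_eq_mul_left hc0]
  · simp only [mul_assoc c m q, deltaTerm_mul_left ψ hc0]
  intro e he hnot
  simp only [Finset.mem_filter, Nat.mem_divisors] at he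
  obtain ⟨⟨hed, hd⟩, hem⟩ := he
  by_contra hne
  have hcop : (c * m / e).Coprime q := by
    by_contra hcop
    exact hne (deltaTerm_mul_eq_zero_of_not_coprime_div ψ hq hcop)
  obtain ⟨e', rfl⟩ :=
    Nat.dvd_of_coprime_div_of_forall_prime_dvd_imp_dvd hc (dvd_mul_right c m) hem hcop
  refine hnot (Finset.mem_image_of_mem _ ?_)
  simp only [Finset.mem_filter, Nat.mem_divisors]
  exact ⟨⟨Nat.dvd_of_mul_dvd_mul_left hc0 hed, right_ne_zero_of_mul hd⟩,
    Nat.dvd_of_mul_dvd_mul_left hc0 hem⟩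

end

theorem deltaFactor_reduction_general (q : ℕ) (hq : 0 < q) (ψ : DirichletCharacter ℂ q)
    (k d k' kq : ℕ)
    (hfac : k = k' * kq) (hcop : Nat.Coprime k' q)
    (hkq : ∀ p : ℕ, p.Prime → p ∣ kq → p ∣ q) :
    ((¬ ∃ d' : ℕ, d = kq * d' ∧ Nat.Coprime d' q) → deltaFactor q (k * q) d ψ = 0) ∧
      (∀ d' : ℕ, d = kq * d' → Nat.Coprime d' q →
        deltaFactor q (k * q) d ψ = deltaFactor q (k' * q) d' ψ) := by
  rw [hfac, mul_comm k' kq]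
  refine ⟨fun hd => ?_, fun d' hd _ => hd ▸ deltaFactor_mul_mul ψ hq hkq k' d'⟩
  by_contra h
  exact hd (exists_eq_mul_coprime_of_deltaFactor_ne_zero ψ hq hkq hcop h)

/-- Reduction of `δ(q, kq, d, ψ)` for a primitive character `ψ` mod `q`: writing
`k = k′ k_q` with `(k′, q) = 1` and every prime of `k_q` dividing `q`, the factor
vanishes unless `d = k_q d′` with `(d′, q) = 1`, in which case it equals
`δ(q, k′q, d′, ψ)`. -/
theorem deltaFactor_reduction (q : ℕ) (hq : 0 < q) (ψ : DirichletCharacter ℂ q)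
    (hψ : ψ.IsPrimitive) (k d k' kq : ℕ) (hk : 0 < k) (hd : d ∣ k * q)
    (hfac : k = k' * kq) (hcop : Nat.Coprime k' q)
    (hkq : ∀ p : ℕ, p.Prime → p ∣ kq → p ∣ q) :
    ((¬ ∃ d' : ℕ, d = kq * d' ∧ Nat.Coprime d' q) → deltaFactor q (k * q) d ψ = 0) ∧
      (∀ d' : ℕ, d = kq * d' → Nat.Coprime d' q →
        deltaFactor q (k * q) d ψ = deltaFactor q (k' * q) d' ψ) :=
  deltaFactor_reduction_general q hq ψ k d k' kq hfac hcop hkq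
end
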